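/- arXiv:1802.04038 — 3 statements merged into one kernel-verified Lean document; each statement's English description precedes it below -/
import Mathlib

section
/- Fix d ≥ 1, q ∈ (0,1] and a positive integer J. For every function f : [0,1]^d → ℝ satisfying |f(x)−f(y)| ≤ ‖x−y‖_∞^q for all x,y, there exist real coefficients α(λ) for λ = (j,τ) with 1 ≤ j ≤ J and τ ∈ {0,…,2^j − 1}^d, a constant c ∈ ℝ, and a function g : [0,1]^d → ℝ, such that f = ∑_{j=1}^J ∑_{τ ∈ {0,…,2^j−1}^d} α(j,τ) 1_{C_{j,τ}} + c + g on [0,1]^d, where |α(j,τ)| ≤ 2^{−(j+1)q} for all j, τ, and ‖g‖_∞ ≤ 2^{−(J+1)q}. -/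
open MeasureTheory
open scoped ENNReal

noncomputable section

/-- The supremum distance `‖x − y‖_∞ = max_i |x_i − y_i|` on `ℝ^d`. -/
def supDist {d : ℕ} (x y : EuclideanSpace ℝ (Fin d)) : ℝ := ⨆ i, |x i - y i|

def unitCube (d : ℕ) : Set (EuclideanSpace ℝ (Fin d)) :=
  {x | ∀ i, x i ∈ Set.Icc (0:ℝ) 1}

/-- The half-open dyadic cube `C_{j,τ} = ∏_i [τ_i 2^{-j}, (τ_i+1) 2^{-j})`, with the
convention that the faces at coordinate value `1` are included. -/
def dyadicCube (d j : ℕ) (τ : Fin d → ℕ) : Set (EuclideanSpace ℝ (Fin d)) :=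
  {x | ∀ i, ((τ i : ℝ) / 2 ^ j ≤ x i ∧ x i < ((τ i : ℝ) + 1) / 2 ^ j)
        ∨ (x i = 1 ∧ τ i + 1 = 2 ^ j)}

/-- Center of the dyadic cube. -/
def hcenter (d j : ℕ) (τ : Fin d → ℕ) : EuclideanSpace ℝ (Fin d) :=
  WithLp.toLp 2 (fun i => ((τ i : ℝ) + 1/2) / 2 ^ j)

/-- Index of the dyadic cube at level `j` containing `x`. -/
def hidx (d j : ℕ) (x : EuclideanSpace ℝ (Fin d)) : Fin d → ℕ :=
  fun i => if x i = 1 then 2 ^ j - 1 else ⌊(2:ℝ) ^ j * x i⌋₊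

lemma hcenter_mem (d j : ℕ) (τ : Fin d → ℕ) (h : ∀ i, τ i < 2 ^ j) :
    hcenter d j τ ∈ unitCube d := by
  intro i
  have hp : (0:ℝ) < 2 ^ j := by positivity
  have hτ : (τ i : ℝ) + 1 ≤ 2 ^ j := by
    have h' : τ i + 1 ≤ 2 ^ j := h i
    have : ((τ i + 1 : ℕ) : ℝ) ≤ (((2:ℕ) ^ j : ℕ) : ℝ) := by exact_mod_cast h'
    push_cast at this; linarith
  simp only [hcenter, PiLp.toLp_apply, Set.mem_Icc]
  constructor
  · positivity
  · rw [div_le_one hp]; linarith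

lemma hidx_lt (d j : ℕ) {x : EuclideanSpace ℝ (Fin d)} (hx : x ∈ unitCube d) (i : Fin d) :
    hidx d j x i < 2 ^ j := by
  unfold hidx
  split_ifs with h
  · have : 0 < 2 ^ j := Nat.pow_pos (by norm_num)
    omega
  · have hxi := hx i
    have hx1 : x i < 1 := lt_of_le_of_ne hxi.2 h
    have h0 : (0:ℝ) ≤ 2 ^ j * x i := by
      have := hxi.1; positivity
    rw [Nat.floor_lt h0]
    have hp : (0:ℝ) < 2 ^ j := by positivity
    calc (2:ℝ) ^ j * x i < 2 ^ j * 1 := by exact mul_lt_mul_of_pos_left hx1 hp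
    _ = ((2^j : ℕ) : ℝ) := by push_cast; ring

lemma mem_hidx (d j : ℕ) {x : EuclideanSpace ℝ (Fin d)} (hx : x ∈ unitCube d) :
    x ∈ dyadicCube d j (hidx d j x) := by
  intro i
  have hxi := hx i
  by_cases h : x i = 1
  · right
    refine ⟨h, ?_⟩
    simp only [hidx, if_pos h]
    have : 0 < 2 ^ j := Nat.pow_pos (by norm_num)
    omega
  · left
    simp only [hidx, if_neg h]
    have hp : (0:ℝ) < 2 ^ j := by positivity
    have h0 : (0:ℝ) ≤ 2 ^ j * x i := by have := hxi.1; positivity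
    constructor
    · rw [div_le_iff₀ hp]
      calc (⌊(2:ℝ) ^ j * x i⌋₊ : ℝ) ≤ 2 ^ j * x i := Nat.floor_le h0
      _ = x i * 2 ^ j := by ring
    · rw [lt_div_iff₀ hp]
      calc x i * 2 ^ j = 2 ^ j * x i := by ring
      _ < ⌊(2:ℝ) ^ j * x i⌋₊ + 1 := Nat.lt_floor_add_one _

lemma hidx_uniq (d j : ℕ) {x : EuclideanSpace ℝ (Fin d)} (hx : x ∈ unitCube d)
    {τ : Fin d → ℕ} (hτ : ∀ i, τ i < 2 ^ j) (hmem : x ∈ dyadicCube d j τ) :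
    τ = hidx d j x := by
  funext i
  have hxi := hx i
  rcases hmem i with ⟨h1, h2⟩ | ⟨h1, h2⟩
  · have hp : (0:ℝ) < 2 ^ j := by positivity
    have hτ' : (τ i : ℝ) + 1 ≤ 2 ^ j := by
      have h' : τ i + 1 ≤ 2 ^ j := hτ i
      have : ((τ i + 1 : ℕ) : ℝ) ≤ (((2:ℕ) ^ j : ℕ) : ℝ) := by exact_mod_cast h'
      push_cast at this; linarith
    have hlt : x i < 1 := by
      calc x i < ((τ i : ℝ) + 1) / 2 ^ j := h2
      _ ≤ 2 ^ j / 2 ^ j := by gcongr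
      _ = 1 := div_self (ne_of_gt hp)
    have hne : x i ≠ 1 := ne_of_lt hlt
    simp only [hidx, if_neg hne]
    symm
    rw [Nat.floor_eq_iff (by have := hxi.1; positivity)]
    constructor
    · rw [div_le_iff₀ hp] at h1; linarith [h1]
    · rw [lt_div_iff₀ hp] at h2; push_cast; linarith [h2]
  · simp only [hidx, if_pos h1]
    omega

lemma dist_hcenter (d j : ℕ) {x : EuclideanSpace ℝ (Fin d)} {τ : Fin d → ℕ}
    (hmem : x ∈ dyadicCube d j τ) (i : Fin d) :
    |x i - hcenter d j τ i| ≤ 1 / (2 * 2 ^ j) := by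
  have hp : (0:ℝ) < 2 ^ j := by positivity
  have hp2 : ((2:ℝ)^j) ≠ 0 := ne_of_gt hp
  simp only [hcenter, PiLp.toLp_apply]
  rcases hmem i with ⟨h1, h2⟩ | ⟨h1, h2⟩
  · have e1 : ((τ i : ℝ) + 1/2) / 2 ^ j - (τ i : ℝ)/2^j = 1/(2*2^j) := by
      field_simp; ring
    have e2 : ((τ i : ℝ) + 1) / 2 ^ j - ((τ i : ℝ) + 1/2)/2^j = 1/(2*2^j) := by
      field_simp; ring
    rw [abs_le]; constructor <;> linarith
  · have hτ : (τ i : ℝ) + 1 = 2 ^ j := by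
      have : ((τ i + 1 : ℕ) : ℝ) = (((2:ℕ) ^ j : ℕ) : ℝ) := by exact_mod_cast h2
      push_cast at this; linarith
    have e : 1 - ((τ i : ℝ) + 1/2) / 2 ^ j = 1/(2*2^j) := by
      field_simp; linarith
    have hpos : (0:ℝ) < 1/(2*2^j) := by positivity
    rw [h1, abs_le]
    constructor <;> linarith

lemma hidx_chain (d m : ℕ) (x : EuclideanSpace ℝ (Fin d)) :
    hidx d m x = fun i => hidx d (m+1) x i / 2 := by
  funext i
  simp only [hidx]
  split_ifs with h
  · have h1 : 0 < 2 ^ m := Nat.pow_pos (by norm_num)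
    have h2 : 2 ^ (m+1) = 2 * 2 ^ m := by ring
    omega
  · have : (2:ℝ) ^ m * x i = (2:ℝ) ^ (m+1) * x i / ((2:ℕ) : ℝ) := by push_cast; ring
    rw [this, Nat.floor_div_natCast]

lemma hidx_zero (d : ℕ) {x : EuclideanSpace ℝ (Fin d)} (hx : x ∈ unitCube d) :
    hidx d 0 x = fun _ => 0 := by
  funext i
  simp only [hidx]
  split_ifs with h
  · simp
  · have hxi := hx i
    have hlt : x i < 1 := lt_of_le_of_ne hxi.2 h
    have : (2:ℝ)^0 * x i < 1 := by simpa using hlt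
    exact Nat.floor_eq_zero.2 this

lemma dist_hcenters (d m : ℕ) (τ : Fin d → ℕ) (i : Fin d) :
    |hcenter d (m+1) τ i - hcenter d m (fun k => τ k / 2) i| ≤ 1 / (2 * 2 ^ (m+1)) := by
  have hp : (0:ℝ) < 2 ^ m := by positivity
  have hp1 : (0:ℝ) < 2 ^ (m+1) := by positivity
  have hdm : 2 * (τ i / 2) + τ i % 2 = τ i := Nat.div_add_mod (τ i) 2
  have hcast : (τ i : ℝ) = 2 * ((τ i / 2 : ℕ) : ℝ) + ((τ i % 2 : ℕ) : ℝ) := by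
    exact_mod_cast (congrArg (fun n : ℕ => (n : ℝ)) hdm).symm
  simp only [hcenter, PiLp.toLp_apply]
  have heq : ((τ i : ℝ) + 1/2) / 2 ^ (m+1) - (((τ i / 2 : ℕ) : ℝ) + 1/2) / 2 ^ m
      = (((τ i % 2 : ℕ) : ℝ) - 1/2) / 2 ^ (m+1) := by
    rw [hcast]
    have h2 : (2:ℝ) ^ (m+1) = 2 * 2 ^ m := by ring
    rw [h2]
    field_simp
    ring
  rw [heq]
  have hr : τ i % 2 = 0 ∨ τ i % 2 = 1 := Nat.mod_two_eq_zero_or_one (τ i)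
  have key : ∀ r : ℝ, |r - 1/2| ≤ 1/2 → |(r - 1/2) / 2^(m+1)| ≤ 1/(2*2^(m+1)) := by
    intro r hrle
    rw [abs_div, abs_of_pos hp1]
    rw [div_le_div_iff₀ hp1 (by positivity)]
    nlinarith [hrle, hp1]
  rcases hr with hr | hr <;> rw [hr] <;> push_cast <;>
    [exact key 0 (by rw [abs_le]; constructor <;> norm_num);
     exact key 1 (by rw [abs_le]; constructor <;> norm_num)]


lemma supDist_nonneg {d : ℕ} (hd : 1 ≤ d) (x y : EuclideanSpace ℝ (Fin d)) :
    0 ≤ supDist x y := by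
  have hne : Nonempty (Fin d) := ⟨⟨0, hd⟩⟩
  have h1 : |x (Classical.arbitrary (Fin d)) - y (Classical.arbitrary (Fin d))| ≤ supDist x y :=
    le_ciSup (f := fun i => |x i - y i|) (Set.Finite.bddAbove (Set.finite_range _)) _
  exact le_trans (abs_nonneg _) h1

lemma supDist_le {d : ℕ} (hd : 1 ≤ d) {x y : EuclideanSpace ℝ (Fin d)} {a : ℝ}
    (h : ∀ i, |x i - y i| ≤ a) : supDist x y ≤ a := by
  have hne : Nonempty (Fin d) := ⟨⟨0, hd⟩⟩
  exact ciSup_le h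

lemma holder_step {d : ℕ} (hd : 1 ≤ d) {q : ℝ} (hq : q ∈ Set.Ioc (0:ℝ) 1)
    {f : EuclideanSpace ℝ (Fin d) → ℝ}
    (hf : ∀ x ∈ unitCube d, ∀ y ∈ unitCube d, |f x - f y| ≤ supDist x y ^ q)
    {x y : EuclideanSpace ℝ (Fin d)} (hx : x ∈ unitCube d) (hy : y ∈ unitCube d)
    (m : ℕ) (h : ∀ i, |x i - y i| ≤ 1 / (2 * 2 ^ m)) :
    |f x - f y| ≤ (2:ℝ) ^ (-((m:ℝ) + 1) * q) := by
  have h2 : (2:ℝ) ^ (-((m:ℝ)+1)) = 1 / (2 * 2 ^ m) := by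
    rw [show -((m:ℝ)+1) = -(((m+1:ℕ)):ℝ) by push_cast; ring,
      Real.rpow_neg (by norm_num), Real.rpow_natCast, pow_succ]
    rw [eq_div_iff (by positivity), inv_mul_eq_div, div_eq_one_iff_eq (by positivity)]
    ring
  have hb : supDist x y ≤ (2:ℝ) ^ (-((m:ℝ)+1)) := by
    rw [h2]; exact supDist_le hd h
  have h0 : 0 ≤ supDist x y := supDist_nonneg hd x y
  calc |f x - f y| ≤ supDist x y ^ q := hf x hx y hy
  _ ≤ ((2:ℝ) ^ (-((m:ℝ)+1))) ^ q := Real.rpow_le_rpow h0 hb hq.1.le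
  _ = (2:ℝ) ^ (-((m:ℝ)+1) * q) := (Real.rpow_mul (by norm_num) _ _).symm

/-- decomposition of Hölder functions. Every function `f` on `[0,1]^d` with
`|f(x)−f(y)| ≤ ‖x−y‖_∞^q` decomposes as `∑_{j=1}^J ∑_τ α(j,τ) 1_{C_{j,τ}} + c + g` with
`|α(j,τ)| ≤ 2^{−(j+1)q}` and `‖g‖_∞ ≤ 2^{−(J+1)q}`. -/
theorem holder_dyadic_decomposition
    (d : ℕ) (hd : 1 ≤ d) (q : ℝ) (hq : q ∈ Set.Ioc (0:ℝ) 1) (J : ℕ) (hJ : 1 ≤ J)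
    (f : EuclideanSpace ℝ (Fin d) → ℝ)
    (hf : ∀ x ∈ unitCube d, ∀ y ∈ unitCube d, |f x - f y| ≤ supDist x y ^ q) :
    ∃ (α : ℕ → (Fin d → ℕ) → ℝ) (c : ℝ) (g : EuclideanSpace ℝ (Fin d) → ℝ),
      (∀ x ∈ unitCube d,
        f x = (∑ j ∈ Finset.Icc 1 J,
                ∑ τ ∈ Fintype.piFinset (fun _ : Fin d => Finset.range (2 ^ j)),
                  α j τ * (dyadicCube d j τ).indicator (fun _ => (1:ℝ)) x)
              + c + g x) ∧
      (∀ j ∈ Finset.Icc 1 J,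
        ∀ τ ∈ Fintype.piFinset (fun _ : Fin d => Finset.range (2 ^ j)),
          |α j τ| ≤ (2 : ℝ) ^ (-((j : ℝ) + 1) * q)) ∧
      (∀ x ∈ unitCube d, |g x| ≤ (2 : ℝ) ^ (-((J : ℝ) + 1) * q)) := by
  refine ⟨fun j τ => f (hcenter d j τ) - f (hcenter d (j-1) (fun i => τ i / 2)),
    f (hcenter d 0 (fun _ => 0)),
    fun x => f x - f (hcenter d J (hidx d J x)), ?_, ?_, ?_⟩
  · intro x hx
    set F : ℕ → ℝ := fun j => f (hcenter d j (hidx d j x)) with hF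
    have hinner : ∀ j, 1 ≤ j →
        (∑ τ ∈ Fintype.piFinset (fun _ : Fin d => Finset.range (2 ^ j)),
          (f (hcenter d j τ) - f (hcenter d (j-1) (fun i => τ i / 2))) *
            (dyadicCube d j τ).indicator (fun _ => (1:ℝ)) x)
        = F j - F (j-1) := by
      intro j hj
      rw [Finset.sum_eq_single_of_mem (hidx d j x) ?_ ?_]
      · rw [Set.indicator_of_mem (mem_hidx d j hx), mul_one]
        have hj' : j - 1 + 1 = j := Nat.succ_pred_eq_of_pos hj
        have hchain := hidx_chain d (j-1) x
        rw [hj'] at hchain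
        rw [← hchain]
      · rw [Fintype.mem_piFinset]
        intro i; rw [Finset.mem_range]; exact hidx_lt d j hx i
      · intro τ hτ hne
        rw [Set.indicator_of_notMem, mul_zero]
        intro hmem
        apply hne
        refine hidx_uniq d j hx (fun i => ?_) hmem
        have := Fintype.mem_piFinset.1 hτ i
        simpa using this
    have htel : ∀ n : ℕ, ∑ j ∈ Finset.Icc 1 n, (F j - F (j-1)) = F n - F 0 := by
      intro n
      induction n with
      | zero => simp
      | succ n ih =>
        rw [Finset.sum_Icc_succ_top (by omega), ih]
        simp only [Nat.add_sub_cancel]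
        ring
    rw [Finset.sum_congr rfl (fun j hj => hinner j (Finset.mem_Icc.1 hj).1), htel J]
    have hF0 : F 0 = f (hcenter d 0 (fun _ => 0)) := by
      rw [hF]; simp only [hidx_zero d hx]
    rw [hF0.symm]
    show f x = (F J - F 0) + F 0 + (f x - F J)
    ring
  · intro j hj τ hτ
    have hj1 : 1 ≤ j := (Finset.mem_Icc.1 hj).1
    obtain ⟨m, rfl⟩ : ∃ m, j = m + 1 := ⟨j - 1, (Nat.succ_pred_eq_of_pos hj1).symm⟩
    simp only [Nat.add_sub_cancel]
    have hτlt : ∀ i, τ i < 2 ^ (m+1) := fun i => by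
      have := Fintype.mem_piFinset.1 hτ i; simpa using this
    have hxm := hcenter_mem d (m+1) τ hτlt
    have hym := hcenter_mem d m (fun i => τ i / 2) (fun i => by
      show τ i / 2 < 2 ^ m
      have h1 := hτlt i
      have h2 : 2 ^ (m+1) = 2 * 2 ^ m := by ring
      omega)
    exact holder_step hd hq hf hxm hym (m+1) (dist_hcenters d m τ)
  · intro x hx
    have hc := hcenter_mem d J (hidx d J x) (hidx_lt d J hx)
    exact holder_step hd hq hf hx hc J (dist_hcenter d J (mem_hidx d J hx))


end
end

section
/- Let λ be Lebesgue measure on [0,1]^d and let ν be any probability measure on ℝ^d whose support is a finite set of at most n points. Then W_1(ν, λ) ≥ (d · Γ(d/2 + 1)^{1/d} / ((d+1)√π)) · n^{−1/d}. -/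
open MeasureTheory
open scoped ENNReal

noncomputable section

/-- The 1-Wasserstein distance, in duality with 1-Lipschitz functions. -/
def W1 {E : Type*} [MeasurableSpace E] [PseudoMetricSpace E] (ν₀ ν₁ : Measure E) : ℝ :=
  ⨆ f : {f : E → ℝ // LipschitzWith 1 f}, |∫ x, f.1 x ∂ν₀ - ∫ x, f.1 x ∂ν₁|

open Metric intervalIntegral

lemma unitCube_eq (d : ℕ) :
    unitCube d = (MeasurableEquiv.toLp 2 (Fin d → ℝ)).symm ⁻¹'
      (Set.univ.pi fun _ : Fin d => Set.Icc (0:ℝ) 1) := by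
  ext x
  exact ⟨fun h i _ => h i, fun h i => h i (Set.mem_univ i)⟩

lemma measurableSet_unitCube (d : ℕ) : MeasurableSet (unitCube d) := by
  rw [unitCube_eq]
  exact (MeasurableEquiv.toLp 2 (Fin d → ℝ)).symm.measurable
    (MeasurableSet.univ_pi fun i => measurableSet_Icc)

lemma volume_unitCube (d : ℕ) : volume (unitCube d) = 1 := by
  rw [unitCube_eq, (EuclideanSpace.volume_preserving_symm_measurableEquiv_toLp (Fin d)).measure_preimage
    (MeasurableSet.univ_pi fun i => measurableSet_Icc).nullMeasurableSet]
  rw [volume_pi_pi]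
  simp [Real.volume_Icc]

lemma norm_le_sqrt_of_mem_unitCube {d : ℕ} {x : EuclideanSpace ℝ (Fin d)}
    (hx : x ∈ unitCube d) : ‖x‖ ≤ Real.sqrt d := by
  rw [EuclideanSpace.norm_eq]
  apply Real.sqrt_le_sqrt
  calc ∑ i, ‖x i‖ ^ 2 ≤ ∑ i : Fin d, 1 := by
        apply Finset.sum_le_sum
        intro i _
        have h := hx i
        have : |x i| ≤ 1 := abs_le.2 ⟨by linarith [h.1], h.2⟩
        calc ‖x i‖ ^ 2 = |x i| ^ 2 := by rw [Real.norm_eq_abs]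
          _ ≤ 1 ^ 2 := by apply pow_le_pow_left₀ (abs_nonneg _) this
          _ = 1 := one_pow 2
    _ = d := by simp

lemma key_integral_bound (d : ℕ) (hd : 1 ≤ d) (n : ℕ)
    (S : Finset (EuclideanSpace ℝ (Fin d))) (hSne : S.Nonempty) (hcard : S.card ≤ n) :
    (d : ℝ) / ((d:ℝ)+1) *
        (((n:ℝ) * (Real.sqrt Real.pi ^ d / Real.Gamma ((d:ℝ)/2+1))) ^ (-(1:ℝ)/d))
      ≤ ∫ x, Metric.infDist x (↑S)
          ∂((volume : Measure (EuclideanSpace ℝ (Fin d))).restrict (unitCube d)) := by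
  have E := EuclideanSpace ℝ (Fin d)
  set μ : Measure (EuclideanSpace ℝ (Fin d)) :=
    (volume : Measure (EuclideanSpace ℝ (Fin d))).restrict (unitCube d) with hμdef
  set f : EuclideanSpace ℝ (Fin d) → ℝ := fun x => Metric.infDist x (↑S) with hfdef
  have hn : 0 < n := lt_of_lt_of_le (Finset.card_pos.mpr hSne) hcard
  have hΓ : 0 < Real.Gamma ((d:ℝ)/2+1) := Real.Gamma_pos_of_pos (by positivity)
  set ω : ℝ := Real.sqrt Real.pi ^ d / Real.Gamma ((d:ℝ)/2+1) with hωdef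
  have hω : 0 < ω := by
    have : (0:ℝ) < Real.sqrt Real.pi := Real.sqrt_pos.mpr Real.pi_pos
    positivity
  set c : ℝ := (n:ℝ) * ω with hcdef
  have hc : 0 < c := by positivity
  set R : ℝ := c ^ (-(1:ℝ)/d) with hRdef
  have hR : 0 < R := Real.rpow_pos_of_pos hc _
  have hd0 : (d:ℝ) ≠ 0 := Nat.cast_ne_zero.mpr (by omega)
  have hRd : c * R ^ d = 1 := by
    rw [hRdef, ← Real.rpow_natCast (c ^ (-(1:ℝ)/d)) d, ← Real.rpow_mul hc.le]
    rw [show (-(1:ℝ)/d) * d = -1 by field_simp]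
    rw [Real.rpow_neg_one]
    field_simp
  have hcont : Continuous f := (lipschitz_infDist_pt (↑S : Set (EuclideanSpace ℝ (Fin d)))).continuous
  have hprob : IsProbabilityMeasure μ := by
    constructor
    rw [hμdef, Measure.restrict_apply_univ, volume_unitCube]
  obtain ⟨s₀, hs₀⟩ := hSne
  have hnn : 0 ≤ᵐ[μ] f := Filter.Eventually.of_forall fun x => Metric.infDist_nonneg
  have hInt : Integrable f μ := by
    refine Integrable.mono' (integrable_const (Real.sqrt d + ‖s₀‖))
      hcont.aestronglyMeasurable ?_
    filter_upwards [ae_restrict_mem (measurableSet_unitCube d)] with x hx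
    have h1 : f x ≤ dist x s₀ := Metric.infDist_le_dist_of_mem (by exact_mod_cast hs₀)
    have h2 : dist x s₀ ≤ ‖x‖ + ‖s₀‖ := dist_le_norm_add_norm x s₀
    have h3 : ‖x‖ ≤ Real.sqrt d := norm_le_sqrt_of_mem_unitCube hx
    rw [Real.norm_eq_abs, abs_of_nonneg Metric.infDist_nonneg]
    linarith
  have hlay : ∫⁻ x, ENNReal.ofReal (f x) ∂μ = ∫⁻ t in Set.Ioi 0, μ {a | t < f a} :=
    lintegral_eq_lintegral_meas_lt μ hnn hcont.aemeasurable
  -- tail bound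
  have htail : ∀ t ∈ Set.Ioc (0:ℝ) R, ENNReal.ofReal (1 - c * t ^ d) ≤ μ {a | t < f a} := by
    intro t ht
    have hmeasle : MeasurableSet {a : EuclideanSpace ℝ (Fin d) | f a ≤ t} :=
      measurableSet_le hcont.measurable measurable_const
    have hsub : {a : EuclideanSpace ℝ (Fin d) | f a ≤ t} ⊆ ⋃ s ∈ S, Metric.closedBall s t := by
      intro x hx
      obtain ⟨y, hyS, hy⟩ := (S.finite_toSet.isCompact).exists_infDist_eq_dist
        ⟨s₀, by exact_mod_cast hs₀⟩ x
      refine Set.mem_biUnion (by exact_mod_cast hyS) ?_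
      rw [Metric.mem_closedBall, ← hy]
      exact hx
    have hvol : μ {a : EuclideanSpace ℝ (Fin d) | f a ≤ t} ≤ ENNReal.ofReal (c * t ^ d) := by
      rw [hμdef, Measure.restrict_apply hmeasle]
      calc volume ({a : EuclideanSpace ℝ (Fin d) | f a ≤ t} ∩ unitCube d)
          ≤ volume (⋃ s ∈ S, Metric.closedBall s t) :=
            measure_mono (Set.inter_subset_left.trans hsub)
        _ ≤ ∑ s ∈ S, volume (Metric.closedBall s t) := measure_biUnion_finset_le S _
        _ = S.card * (ENNReal.ofReal t ^ d * ENNReal.ofReal ω) := by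
            haveI : Nonempty (Fin d) := ⟨⟨0, by omega⟩⟩
            rw [Finset.sum_congr rfl fun s _ => ?_, Finset.sum_const, nsmul_eq_mul]
            rw [EuclideanSpace.volume_closedBall _ s t, Fintype.card_fin]
        _ ≤ ENNReal.ofReal (c * t ^ d) := by
            rw [← ENNReal.ofReal_pow ht.1.le, ← ENNReal.ofReal_mul (pow_nonneg ht.1.le d),
              ← ENNReal.ofReal_natCast S.card, ← ENNReal.ofReal_mul (Nat.cast_nonneg _)]
            apply ENNReal.ofReal_le_ofReal
            have h1 : (S.card : ℝ) ≤ (n : ℝ) := by exact_mod_cast hcard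
            have h2 : (0:ℝ) ≤ t ^ d * ω := mul_nonneg (pow_nonneg ht.1.le d) hω.le
            calc (S.card : ℝ) * (t ^ d * ω) ≤ (n:ℝ) * (t ^ d * ω) := by gcongr
              _ = c * t ^ d := by rw [hcdef]; ring
    have hcompl : {a : EuclideanSpace ℝ (Fin d) | t < f a} = {a : EuclideanSpace ℝ (Fin d) | f a ≤ t}ᶜ := by
      ext a; simp [not_le]
    rw [hcompl, measure_compl hmeasle (measure_ne_top _ _), hprob.measure_univ]
    calc ENNReal.ofReal (1 - c * t ^ d)
        = 1 - ENNReal.ofReal (c * t ^ d) := by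
          rw [ENNReal.ofReal_sub _ (mul_nonneg hc.le (pow_nonneg ht.1.le d)), ENNReal.ofReal_one]
      _ ≤ 1 - μ {a : EuclideanSpace ℝ (Fin d) | f a ≤ t} := tsub_le_tsub_left hvol 1
  -- main estimate on the lintegral
  have h1 : ENNReal.ofReal ((d:ℝ)/((d:ℝ)+1) * R) ≤ ∫⁻ x, ENNReal.ofReal (f x) ∂μ := by
    rw [hlay]
    have hintg : IntegrableOn (fun t : ℝ => 1 - c * t ^ d) (Set.Ioc 0 R) :=
      (continuous_const.sub (continuous_const.mul (continuous_pow d))).integrableOn_Ioc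
    have hnn2 : 0 ≤ᵐ[volume.restrict (Set.Ioc (0:ℝ) R)] fun t : ℝ => 1 - c * t ^ d := by
      filter_upwards [ae_restrict_mem measurableSet_Ioc] with t ht
      have h2 : t ^ d ≤ R ^ d := pow_le_pow_left₀ ht.1.le ht.2 d
      have h3 : c * t ^ d ≤ c * R ^ d := by gcongr
      simp only [Pi.zero_apply]
      linarith [hRd]
    calc ENNReal.ofReal ((d:ℝ)/((d:ℝ)+1) * R)
        = ∫⁻ t in Set.Ioc (0:ℝ) R, ENNReal.ofReal (1 - c * t ^ d) := by
          rw [← ofReal_integral_eq_lintegral_ofReal hintg hnn2]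
          congr 1
          rw [← intervalIntegral.integral_of_le hR.le]
          rw [intervalIntegral.integral_sub intervalIntegrable_const
            (IntervalIntegrable.const_mul (intervalIntegrable_pow d) c)]
          rw [intervalIntegral.integral_const, intervalIntegral.integral_const_mul, integral_pow]
          have hRs : c * R ^ (d+1) = R := by
            rw [pow_succ, ← mul_assoc, hRd, one_mul]
          have hz : (0:ℝ) ^ (d+1) = 0 := zero_pow (by omega)
          rw [hz, smul_eq_mul, mul_one, sub_zero]
          have hd1 : (0:ℝ) < (d:ℝ) + 1 := by positivity
          field_simp
          nlinarith [hRs, hd1]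
      _ ≤ ∫⁻ t in Set.Ioc (0:ℝ) R, μ {a | t < f a} :=
          setLIntegral_mono' measurableSet_Ioc htail
      _ ≤ ∫⁻ t in Set.Ioi (0:ℝ), μ {a | t < f a} :=
          lintegral_mono_set Set.Ioc_subset_Ioi_self
  have hfin : ∫⁻ x, ENNReal.ofReal (f x) ∂μ ≠ ⊤ := hInt.lintegral_lt_top.ne
  have h2 := ENNReal.toReal_mono hfin h1
  rw [ENNReal.toReal_ofReal (by positivity)] at h2
  rw [integral_eq_lintegral_of_nonneg_ae hnn hcont.aestronglyMeasurable]
  exact h2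

/-- lower bound for finitely supported approximations. If `λ` is Lebesgue
measure on `[0,1]^d` and `ν` is any probability measure supported on at most `n` points, then
`W₁(ν, λ) ≥ (d Γ(d/2+1)^{1/d} / ((d+1)√π)) n^{−1/d}`. -/
theorem W1_lower_bound_finite_support
    (d : ℕ) (hd : 1 ≤ d) (n : ℕ)
    (ν : Measure (EuclideanSpace ℝ (Fin d))) [IsProbabilityMeasure ν]
    (S : Finset (EuclideanSpace ℝ (Fin d))) (hcard : S.card ≤ n)
    (hsupp : ν ((↑S : Set (EuclideanSpace ℝ (Fin d)))ᶜ) = 0) :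
    (d : ℝ) * Real.Gamma ((d : ℝ) / 2 + 1) ^ (1 / (d : ℝ))
        / (((d : ℝ) + 1) * Real.sqrt Real.pi) * (n : ℝ) ^ (-(1 : ℝ) / d)
      ≤ W1 ν ((volume : Measure (EuclideanSpace ℝ (Fin d))).restrict (unitCube d)) := by
  set μ : Measure (EuclideanSpace ℝ (Fin d)) :=
    (volume : Measure (EuclideanSpace ℝ (Fin d))).restrict (unitCube d) with hμdef
  have hSne : S.Nonempty := by
    rcases S.eq_empty_or_nonempty with h | h
    · exfalso
      rw [h] at hsupp
      simp [measure_univ] at hsupp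
    · exact h
  have hπ : 0 < Real.sqrt Real.pi := Real.sqrt_pos.mpr Real.pi_pos
  have hΓ : 0 < Real.Gamma ((d:ℝ)/2+1) := Real.Gamma_pos_of_pos (by positivity)
  have hd0 : (d:ℝ) ≠ 0 := Nat.cast_ne_zero.mpr (by omega)
  have hμprob : IsProbabilityMeasure μ := by
    constructor
    rw [hμdef, Measure.restrict_apply_univ, volume_unitCube]
  set f : EuclideanSpace ℝ (Fin d) → ℝ :=
    fun x => Metric.infDist x (↑S : Set (EuclideanSpace ℝ (Fin d))) with hfdef
  have hlip : LipschitzWith 1 f := lipschitz_infDist_pt _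
  have hae : ∀ᵐ x ∂ν, x ∈ (↑S : Set (EuclideanSpace ℝ (Fin d))) := by
    rw [ae_iff]
    exact hsupp
  have hν0 : ∫ x, f x ∂ν = 0 := by
    have hz : f =ᵐ[ν] 0 := by
      filter_upwards [hae] with x hx
      exact infDist_zero_of_mem hx
    rw [integral_congr_ae hz]
    simp
  -- rewrite the constant
  have hconst : (d : ℝ) * Real.Gamma ((d : ℝ) / 2 + 1) ^ (1 / (d : ℝ))
        / (((d : ℝ) + 1) * Real.sqrt Real.pi) * (n : ℝ) ^ (-(1 : ℝ) / d)
      = (d:ℝ)/((d:ℝ)+1) *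
        (((n:ℝ) * (Real.sqrt Real.pi ^ d / Real.Gamma ((d:ℝ)/2+1))) ^ (-(1:ℝ)/d)) := by
    rw [Real.mul_rpow (Nat.cast_nonneg n) (by positivity)]
    rw [Real.div_rpow (by positivity) hΓ.le]
    have h1 : ((Real.sqrt Real.pi ^ d : ℝ)) ^ (-(1:ℝ)/d) = (Real.sqrt Real.pi)⁻¹ := by
      rw [← Real.rpow_natCast (Real.sqrt Real.pi) d, ← Real.rpow_mul hπ.le]
      rw [show (d:ℝ) * (-(1:ℝ)/d) = -1 by field_simp]
      exact Real.rpow_neg_one _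
    have h2 : Real.Gamma ((d:ℝ)/2+1) ^ (-(1:ℝ)/d)
        = (Real.Gamma ((d:ℝ)/2+1) ^ ((1:ℝ)/d))⁻¹ := by
      rw [← Real.rpow_neg hΓ.le]
      congr 1
      ring
    rw [h1, h2]
    have h3 : (0:ℝ) < Real.Gamma ((d:ℝ)/2+1) ^ ((1:ℝ)/d) := Real.rpow_pos_of_pos hΓ _
    have h4 : (0:ℝ) < (d:ℝ) + 1 := by positivity
    rw [show (1:ℝ)/(d:ℝ) = 1/(d:ℝ) from rfl]
    field_simp
  -- boundedness of the W1 index family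
  obtain ⟨s₀, hs₀⟩ := hSne
  set M : ℝ := S.sup' ⟨s₀, hs₀⟩ (fun s => ‖s‖) with hMdef
  have hM : ∀ s ∈ S, ‖s‖ ≤ M := fun s hs => Finset.le_sup' _ hs
  set G : {g : EuclideanSpace ℝ (Fin d) → ℝ // LipschitzWith 1 g} → ℝ :=
    fun g => |∫ x, g.1 x ∂ν - ∫ x, g.1 x ∂μ| with hGdef
  have hbound : ∀ g : {g : EuclideanSpace ℝ (Fin d) → ℝ // LipschitzWith 1 g},
      G g ≤ M + Real.sqrt d := by
    intro g
    set gc : EuclideanSpace ℝ (Fin d) → ℝ := fun x => g.1 x - g.1 0 with hgcdef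
    have hgc_cont : Continuous gc := (g.2.continuous).sub continuous_const
    have hgc_le : ∀ x : EuclideanSpace ℝ (Fin d), ‖gc x‖ ≤ ‖x‖ := by
      intro x
      have h := g.2.dist_le_mul x 0
      simp only [NNReal.coe_one, one_mul, dist_eq_norm, dist_zero_right, sub_zero] at h
      exact h
    have hb1 : ∀ᵐ x ∂ν, ‖gc x‖ ≤ M := by
      filter_upwards [hae] with x hx
      exact (hgc_le x).trans (hM x hx)
    have hb2 : ∀ᵐ x ∂μ, ‖gc x‖ ≤ Real.sqrt d := by
      rw [hμdef]
      filter_upwards [ae_restrict_mem (measurableSet_unitCube d)] with x hx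
      exact (hgc_le x).trans (norm_le_sqrt_of_mem_unitCube hx)
    have hint1 : Integrable gc ν :=
      Integrable.mono' (integrable_const M) hgc_cont.aestronglyMeasurable hb1
    have hint2 : Integrable gc μ :=
      Integrable.mono' (integrable_const (Real.sqrt d)) hgc_cont.aestronglyMeasurable hb2
    have hrw : ∀ (κ : Measure (EuclideanSpace ℝ (Fin d))) [IsProbabilityMeasure κ],
        Integrable gc κ → ∫ x, g.1 x ∂κ = ∫ x, gc x ∂κ + g.1 0 := by
      intro κ hκ hint
      have : (fun x => g.1 x) = fun x => gc x + g.1 0 := by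
        funext x
        simp [hgcdef]
      rw [this, integral_add hint (integrable_const _), MeasureTheory.integral_const]
      simp [measure_univ]
    have e1 := hrw ν hint1
    have e2 := hrw μ hint2
    have n1 : ‖∫ x, gc x ∂ν‖ ≤ M := by
      have := norm_integral_le_of_norm_le_const hb1
      simpa [measure_univ] using this
    have n2 : ‖∫ x, gc x ∂μ‖ ≤ Real.sqrt d := by
      have := norm_integral_le_of_norm_le_const hb2
      simpa [measure_univ] using this
    rw [hGdef]
    simp only
    rw [e1, e2]
    rw [add_sub_add_right_eq_sub]
    calc |∫ x, gc x ∂ν - ∫ x, gc x ∂μ| ≤ |∫ x, gc x ∂ν| + |∫ x, gc x ∂μ| := abs_sub _ _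
      _ ≤ M + Real.sqrt d := by
          apply add_le_add
          · exact (Real.norm_eq_abs _ ▸ n1)
          · exact (Real.norm_eq_abs _ ▸ n2)
  have hbdd : BddAbove (Set.range G) := by
    refine ⟨M + Real.sqrt d, ?_⟩
    rintro _ ⟨g, rfl⟩
    exact hbound g
  have hkey := key_integral_bound d hd n S ⟨s₀, hs₀⟩ hcard
  have hfG : G ⟨f, hlip⟩ = ∫ x, f x ∂μ := by
    rw [hGdef]
    simp only
    rw [hν0, zero_sub, abs_neg,
      abs_of_nonneg (integral_nonneg fun x => Metric.infDist_nonneg)]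
  calc (d : ℝ) * Real.Gamma ((d : ℝ) / 2 + 1) ^ (1 / (d : ℝ))
        / (((d : ℝ) + 1) * Real.sqrt Real.pi) * (n : ℝ) ^ (-(1 : ℝ) / d)
      = (d:ℝ)/((d:ℝ)+1) *
        (((n:ℝ) * (Real.sqrt Real.pi ^ d / Real.Gamma ((d:ℝ)/2+1))) ^ (-(1:ℝ)/d)) := hconst
    _ ≤ ∫ x, f x ∂μ := hkey
    _ = G ⟨f, hlip⟩ := hfG.symm
    _ ≤ ⨆ g, G g := le_ciSup hbdd ⟨f, hlip⟩
    _ = W1 ν μ := rfl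

end
end

section
/- Let Ω be a bounded Borel subset of ℝ^d and (X_k)_{k≥0} a Markov chain on Ω (with arbitrary initial distribution) whose transition kernel is exponentially contracting in W_1 with constants D ≥ 1 and θ ∈ (0,1). Then there is a constant C depending only on D and the diameter of Ω such that for every α ∈ (0,1], every bounded measurable f : Ω → ℂ with finite α-Hölder constant Hol_α(f), and all ℓ, m ∈ ℕ, |E[f(X_m) f(X_ℓ)] − E[f(X_m)] E[f(X_ℓ)]| ≤ C · Hol_α(f)² · θ^{α|m−ℓ|}. -/
open MeasureTheory ProbabilityTheory
open scoped ENNReal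

noncomputable section

/-- The empirical measure `μ̂_n = (1/n) ∑_{k=1}^n δ_{X_k}` of a process. -/
def empMeasure {Ω E : Type*} [MeasurableSpace Ω] [MeasurableSpace E]
    (X : ℕ → Ω → E) (n : ℕ) (ω : Ω) : Measure E :=
  (n : ℝ≥0∞)⁻¹ • ∑ k ∈ Finset.Icc 1 n, Measure.dirac (X k ω)

/-- `π` is a coupling of `ν₀` and `ν₁`. -/
def IsCoupling {E : Type*} [MeasurableSpace E] (π : Measure (E × E))
    (ν₀ ν₁ : Measure E) : Prop :=
  π.map Prod.fst = ν₀ ∧ π.map Prod.snd = ν₁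

/-- The `t`-step iterate `m^t` of a Markov kernel. -/
def kernelIter {E : Type*} [MeasurableSpace E] (κ : Kernel E E) : ℕ → Kernel E E
  | 0 => Kernel.id
  | t + 1 => (kernelIter κ t).comp κ

/-- The kernel `κ` is exponentially contracting in `W₁` on `Ωs`, with constants `D`, `θ`:
for all `x, y ∈ Ωs` and `t`, there is a coupling `π` of `m^t_x` and `m^t_y` with
`∫ ‖u − v‖ dπ ≤ D θ^t ‖x − y‖`. -/
def ExpContracting {d : ℕ} (Ωs : Set (EuclideanSpace ℝ (Fin d)))
    (κ : Kernel (EuclideanSpace ℝ (Fin d)) (EuclideanSpace ℝ (Fin d)))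
    (D θ : ℝ) : Prop :=
  ∀ x ∈ Ωs, ∀ y ∈ Ωs, ∀ t : ℕ,
    ∃ π : Measure (EuclideanSpace ℝ (Fin d) × EuclideanSpace ℝ (Fin d)),
      IsCoupling π (kernelIter κ t x) (kernelIter κ t y) ∧
      ∫ p, ‖p.1 - p.2‖ ∂π ≤ D * θ ^ t * ‖x - y‖

/-- The σ-algebra generated by `X_0, …, X_n`. -/
def chainFiltration {Ω E : Type*} [MeasurableSpace E] (X : ℕ → Ω → E) (n : ℕ) :
    MeasurableSpace Ω :=
  ⨆ i ∈ Set.Iic n, MeasurableSpace.comap (X i) inferInstance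

/-- `(X_k)_{k≥0}` is a Markov chain with transition kernel `κ` under `P`: each `X_k` is
measurable and `E[1_A(X_{k+1}) | X_0, …, X_k] = κ(X_k, A)` a.s. -/
def IsMarkovChainWith {Ω E : Type*} [MeasurableSpace Ω] [MeasurableSpace E]
    (P : Measure Ω) (κ : Kernel E E) (X : ℕ → Ω → E) : Prop :=
  (∀ n, Measurable (X n)) ∧
  ∀ (n : ℕ) (A : Set E), MeasurableSet A →
    (fun ω => (κ (X n ω) A).toReal) =ᵐ[P]
      P[fun ω => Set.indicator A (fun _ => (1:ℝ)) (X (n+1) ω) | chainFiltration X n]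

set_option linter.unusedSectionVars false

section AuxPlumbing


variable {Ω E : Type*} [MeasurableSpace Ω] [MeasurableSpace E]
  {P : Measure Ω} {κ : Kernel E E} {X : ℕ → Ω → E}

lemma kernelIter_isMarkov (κ : Kernel E E) [IsMarkovKernel κ] (t : ℕ) :
    IsMarkovKernel (kernelIter κ t) := by
  induction t with
  | zero => exact (by unfold kernelIter; infer_instance)
  | succ t ih => unfold kernelIter; exact @Kernel.IsMarkovKernel.comp _ _ _ _ _ _ _ ih _ _

lemma kernelIter_succ_left (κ : Kernel E E) [IsMarkovKernel κ] (t : ℕ) :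
    kernelIter κ (t + 1) = κ.comp (kernelIter κ t) := by
  induction t with
  | zero =>
    show (kernelIter κ 0).comp κ = κ.comp (kernelIter κ 0)
    unfold kernelIter
    rw [Kernel.id_comp, Kernel.comp_id]
  | succ t ih =>
    show (kernelIter κ (t+1)).comp κ = _
    rw [ih]
    rw [Kernel.comp_assoc, show kernelIter κ t ∘ₖ κ = kernelIter κ (t+1) from rfl, ih]

lemma chainFiltration_le (hX : ∀ n, Measurable (X n)) (n : ℕ) :
    chainFiltration X n ≤ ‹MeasurableSpace Ω› := by
  refine iSup_le fun i => iSup_le fun _ => ?_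
  exact measurable_iff_comap_le.mp (hX i)

lemma chainFiltration_mono {a b : ℕ} (hab : a ≤ b) :
    chainFiltration X a ≤ chainFiltration (E := E) X b := by
  refine iSup_le fun i => iSup_le fun hi => ?_
  exact le_iSup₂ (f := fun i (_ : i ∈ Set.Iic b) => MeasurableSpace.comap (X i) inferInstance)
    i (le_trans hi hab)

lemma measurable_chainFiltration {i n : ℕ} (hin : i ≤ n) :
    Measurable[chainFiltration X n] (X i) :=
  measurable_iff_comap_le.mpr
    (le_iSup₂ (f := fun i (_ : i ∈ Set.Iic n) => MeasurableSpace.comap (X i) inferInstance) i hin)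


set_option linter.unusedSectionVars false

lemma step_set [IsProbabilityMeasure P] [IsMarkovKernel κ] (hX : IsMarkovChainWith P κ X)
    (n : ℕ) {B : Set Ω} (hB : MeasurableSet[chainFiltration X n] B)
    {A : Set E} (hA : MeasurableSet A) :
    P (B ∩ X (n+1) ⁻¹' A) = ∫⁻ ω in B, κ (X n ω) A ∂P := by
  have hle := chainFiltration_le hX.1 n
  have hBm : MeasurableSet B := hle _ hB
  haveI : SigmaFinite (P.trim hle) := by
    haveI : IsFiniteMeasure (P.trim hle) := isFiniteMeasure_trim hle
    infer_instance
  have hind : (fun ω => Set.indicator A (fun _ => (1:ℝ)) (X (n+1) ω))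
      = Set.indicator (X (n+1) ⁻¹' A) (fun _ => (1:ℝ)) := rfl
  have hint : Integrable (fun ω => Set.indicator A (fun _ => (1:ℝ)) (X (n+1) ω)) P := by
    rw [hind]
    exact (integrable_const (1:ℝ)).indicator (hX.1 (n+1) hA)
  have h1 : ∫ ω in B, (κ (X n ω) A).toReal ∂P
      = ∫ ω in B, Set.indicator A (fun _ => (1:ℝ)) (X (n+1) ω) ∂P := by
    rw [integral_congr_ae (ae_restrict_of_ae (hX.2 n A hA))]
    exact setIntegral_condExp hle hint hB
  have h2 : ∫ ω in B, Set.indicator A (fun _ => (1:ℝ)) (X (n+1) ω) ∂P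
      = (P (B ∩ X (n+1) ⁻¹' A)).toReal := by
    rw [hind, integral_indicator_const (1:ℝ) (hX.1 (n+1) hA),
      measureReal_restrict_apply (hX.1 (n+1) hA), smul_eq_mul, mul_one, Set.inter_comm,
        measureReal_def]
  have h3 : ∫ ω in B, (κ (X n ω) A).toReal ∂P = (∫⁻ ω in B, κ (X n ω) A ∂P).toReal := by
    refine integral_toReal ?_ ?_
    · exact ((Kernel.measurable_coe κ hA).comp (hX.1 n)).aemeasurable
    · exact Filter.Eventually.of_forall fun ω => lt_of_le_of_lt prob_le_one
        (by norm_num)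
  have hfin1 : P (B ∩ X (n+1) ⁻¹' A) ≠ ∞ := measure_ne_top _ _
  have hfin2 : ∫⁻ ω in B, κ (X n ω) A ∂P ≠ ∞ := by
    refine ne_top_of_le_ne_top (measure_ne_top P B) ?_
    calc ∫⁻ ω in B, κ (X n ω) A ∂P ≤ ∫⁻ _ in B, 1 ∂P :=
          lintegral_mono fun ω => prob_le_one
      _ = P B := setLIntegral_one B
  have h4 : (∫⁻ ω in B, κ (X n ω) A ∂P).toReal = (P (B ∩ X (n+1) ⁻¹' A)).toReal :=
    h3.symm.trans (h1.trans h2)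
  exact ((ENNReal.toReal_eq_toReal_iff' hfin2 hfin1).mp h4).symm

lemma step_fn [IsProbabilityMeasure P] [IsMarkovKernel κ] (hX : IsMarkovChainWith P κ X)
    (n : ℕ) {B : Set Ω} (hB : MeasurableSet[chainFiltration X n] B)
    {g : E → ℝ≥0∞} (hg : Measurable g) :
    ∫⁻ ω in B, g (X (n+1) ω) ∂P = ∫⁻ ω in B, ∫⁻ e, g e ∂(κ (X n ω)) ∂P := by
  have hle := chainFiltration_le hX.1 n
  have hBm : MeasurableSet B := hle _ hB
  have hk : Measurable fun ω => κ (X n ω) := κ.measurable.comp (hX.1 n)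
  have hmeq : (P.restrict B).map (X (n+1)) = (P.restrict B).bind fun ω => κ (X n ω) := by
    ext A hA
    rw [Measure.map_apply (hX.1 (n+1)) hA, Measure.bind_apply hA hk.aemeasurable,
      Measure.restrict_apply (hX.1 (n+1) hA), Set.inter_comm]
    exact step_set hX n hB hA
  calc ∫⁻ ω in B, g (X (n+1) ω) ∂P
      = ∫⁻ e, g e ∂((P.restrict B).map (X (n+1))) := (lintegral_map hg (hX.1 (n+1))).symm
    _ = ∫⁻ e, g e ∂((P.restrict B).bind fun ω => κ (X n ω)) := by rw [hmeq]
    _ = ∫⁻ ω in B, ∫⁻ e, g e ∂(κ (X n ω)) ∂P := Measure.lintegral_bind hk.aemeasurable hg.aemeasurable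

lemma multistep [IsProbabilityMeasure P] [IsMarkovKernel κ] (hX : IsMarkovChainWith P κ X)
    (Δ : ℕ) : ∀ (ℓ : ℕ) (B : Set Ω), MeasurableSet[chainFiltration X ℓ] B →
    ∀ (g : E → ℝ≥0∞), Measurable g →
    ∫⁻ ω in B, g (X (ℓ + Δ) ω) ∂P = ∫⁻ ω in B, ∫⁻ e, g e ∂(kernelIter κ Δ (X ℓ ω)) ∂P := by
  induction Δ with
  | zero =>
    intro ℓ B hB g hg
    simp only [Nat.add_zero]
    refine lintegral_congr fun ω => ?_
    rw [show kernelIter κ 0 = Kernel.id from rfl, Kernel.id_apply, lintegral_dirac' _ hg]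
  | succ Δ ih =>
    intro ℓ B hB g hg
    have hB' : MeasurableSet[chainFiltration X (ℓ + Δ)] B :=
      chainFiltration_mono (Nat.le_add_right ℓ Δ) _ hB
    have h1 : ∫⁻ ω in B, g (X (ℓ + (Δ+1)) ω) ∂P
        = ∫⁻ ω in B, ∫⁻ e, g e ∂(κ (X (ℓ + Δ) ω)) ∂P := by
      have := step_fn hX (ℓ + Δ) hB' hg
      rw [show ℓ + (Δ+1) = (ℓ + Δ) + 1 from rfl]
      exact this
    have hg' : Measurable fun x => ∫⁻ e, g e ∂(κ x) :=
      Measurable.lintegral_kernel_prod_right (f := fun _ y => g y)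
        (hg.comp measurable_snd)
    rw [h1, ih ℓ B hB _ hg']
    refine lintegral_congr fun ω => ?_
    rw [kernelIter_succ_left κ Δ, Kernel.lintegral_comp κ (kernelIter κ Δ) _ hg]

lemma multistep_set [IsProbabilityMeasure P] [IsMarkovKernel κ] (hX : IsMarkovChainWith P κ X)
    (ℓ Δ : ℕ) {B : Set Ω} (hB : MeasurableSet[chainFiltration X ℓ] B)
    {A : Set E} (hA : MeasurableSet A) :
    P (B ∩ X (ℓ + Δ) ⁻¹' A) = ∫⁻ ω in B, kernelIter κ Δ (X ℓ ω) A ∂P := by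
  have hle := chainFiltration_le hX.1 ℓ
  have := multistep hX Δ ℓ B hB (A.indicator 1) (measurable_one.indicator hA)
  have hLHS : ∫⁻ ω in B, A.indicator 1 (X (ℓ + Δ) ω) ∂P = P (B ∩ X (ℓ + Δ) ⁻¹' A) := by
    have hrw : (fun ω => A.indicator (1 : E → ℝ≥0∞) (X (ℓ + Δ) ω))
        = (X (ℓ + Δ) ⁻¹' A).indicator (1 : Ω → ℝ≥0∞) := rfl
    rw [hrw, lintegral_indicator (hX.1 (ℓ + Δ) hA)]
    simp only [Pi.one_apply]
    rw [setLIntegral_one,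
      Measure.restrict_apply (hX.1 (ℓ + Δ) hA), Set.inter_comm]
  rw [← hLHS, this]
  exact lintegral_congr fun ω => lintegral_indicator_one hA



lemma joint_law [IsProbabilityMeasure P] [IsMarkovKernel κ] (hX : IsMarkovChainWith P κ X)
    (ℓ Δ : ℕ) :
    P.map (fun ω => (X ℓ ω, X (ℓ + Δ) ω)) = (P.map (X ℓ)) ⊗ₘ kernelIter κ Δ := by
  haveI := kernelIter_isMarkov κ Δ
  have hpair : Measurable fun ω => (X ℓ ω, X (ℓ + Δ) ω) :=
    (hX.1 ℓ).prodMk (hX.1 (ℓ + Δ))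
  haveI : IsProbabilityMeasure (P.map (X ℓ)) :=
    Measure.isProbabilityMeasure_map (hX.1 ℓ).aemeasurable
  haveI : IsProbabilityMeasure (P.map (fun ω => (X ℓ ω, X (ℓ + Δ) ω))) :=
    Measure.isProbabilityMeasure_map hpair.aemeasurable
  refine ext_of_generate_finite _ generateFrom_prod.symm isPiSystem_prod ?_ ?_
  · rintro s ⟨A₁, hA₁, A₂, hA₂, rfl⟩
    rw [Measure.map_apply hpair (hA₁.prod hA₂), Measure.compProd_apply_prod hA₁ hA₂,
      Set.mk_preimage_prod, setLIntegral_map hA₁ (Kernel.measurable_coe _ hA₂) (hX.1 ℓ)]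
    exact multistep_set hX ℓ Δ ((measurable_chainFiltration le_rfl) hA₁) hA₂
  · rw [measure_univ, measure_univ]

lemma main_identity [IsProbabilityMeasure P] [IsMarkovKernel κ] (hX : IsMarkovChainWith P κ X)
    (ℓ Δ : ℕ) {ψ φ : E → ℂ} (hψ : Measurable ψ) (hφ : Measurable φ)
    {Mψ Mφ : ℝ} (hbψ : ∀ x, ‖ψ x‖ ≤ Mψ) (hbφ : ∀ x, ‖φ x‖ ≤ Mφ) :
    ∫ ω, ψ (X ℓ ω) * φ (X (ℓ + Δ) ω) ∂P
      = ∫ ω, ψ (X ℓ ω) * (∫ e, φ e ∂(kernelIter κ Δ (X ℓ ω))) ∂P := by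
  haveI := kernelIter_isMarkov κ Δ
  have hpair : Measurable fun ω => (X ℓ ω, X (ℓ + Δ) ω) :=
    (hX.1 ℓ).prodMk (hX.1 (ℓ + Δ))
  haveI : IsProbabilityMeasure (P.map (X ℓ)) :=
    Measure.isProbabilityMeasure_map (hX.1 ℓ).aemeasurable
  haveI hPP : IsProbabilityMeasure ((P.map (X ℓ)) ⊗ₘ kernelIter κ Δ) :=
    ⟨by rw [Measure.compProd_apply_univ]; exact measure_univ⟩
  have hF : Measurable fun p : E × E => ψ p.1 * φ p.2 :=
    (hψ.comp measurable_fst).mul (hφ.comp measurable_snd)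
  have hInt : Integrable (fun p : E × E => ψ p.1 * φ p.2)
      ((P.map (X ℓ)) ⊗ₘ kernelIter κ Δ) := by
    refine Integrable.mono' (integrable_const (Mψ * Mφ)) hF.aestronglyMeasurable ?_
    refine Filter.Eventually.of_forall fun p => ?_
    rw [norm_mul]
    exact mul_le_mul (hbψ p.1) (hbφ p.2) (norm_nonneg _) ((norm_nonneg _).trans (hbψ p.1))
  have hker : StronglyMeasurable fun x => ∫ e, φ e ∂(kernelIter κ Δ x) :=
    MeasureTheory.StronglyMeasurable.integral_kernel_prod_right
      (f := fun _ y => φ y) (hφ.stronglyMeasurable.comp_measurable measurable_snd)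
  calc ∫ ω, ψ (X ℓ ω) * φ (X (ℓ + Δ) ω) ∂P
      = ∫ p, ψ p.1 * φ p.2 ∂(P.map (fun ω => (X ℓ ω, X (ℓ + Δ) ω))) :=
        (integral_map hpair.aemeasurable hF.aestronglyMeasurable).symm
    _ = ∫ p, ψ p.1 * φ p.2 ∂((P.map (X ℓ)) ⊗ₘ kernelIter κ Δ) := by
        rw [joint_law hX ℓ Δ]
    _ = ∫ x, ∫ y, ψ x * φ y ∂(kernelIter κ Δ x) ∂(P.map (X ℓ)) :=
        Measure.integral_compProd hInt
    _ = ∫ x, ψ x * ∫ y, φ y ∂(kernelIter κ Δ x) ∂(P.map (X ℓ)) := by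
        refine integral_congr_ae (Filter.Eventually.of_forall fun x => ?_)
        simp_rw [← smul_eq_mul, integral_smul]
    _ = ∫ ω, ψ (X ℓ ω) * (∫ e, φ e ∂(kernelIter κ Δ (X ℓ ω))) ∂P := by
        rw [integral_map (f := fun x => ψ x * ∫ e, φ e ∂(kernelIter κ Δ x)) (hX.1 ℓ).aemeasurable
          ((hψ.mul hker.measurable).aestronglyMeasurable)]

end AuxPlumbing

section AuxAnalysis
open scoped NNReal

lemma rpow_add_le_real {a b : ℝ} (ha : 0 ≤ a) (hb : 0 ≤ b) {p : ℝ} (hp : 0 ≤ p) (hp1 : p ≤ 1) :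
    (a + b) ^ p ≤ a ^ p + b ^ p := by
  have h := NNReal.rpow_add_le_add_rpow (a.toNNReal) (b.toNNReal) hp hp1
  have h2 : ((a.toNNReal + b.toNNReal : ℝ≥0) : ℝ) ^ p
      ≤ ((a.toNNReal ^ p + b.toNNReal ^ p : ℝ≥0) : ℝ) := by
    rw [← NNReal.coe_rpow]
    exact_mod_cast h
  rw [NNReal.coe_add, NNReal.coe_add, NNReal.coe_rpow, NNReal.coe_rpow,
    Real.coe_toNNReal _ ha, Real.coe_toNNReal _ hb] at h2
  exact h2

lemma rpow_le_aux {t s α : ℝ} (ht : 0 ≤ t) (hs : 0 < s) (hα : 0 < α) (hα1 : α ≤ 1) :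
    t ^ α ≤ s ^ α + s ^ (α - 1) * t := by
  rcases le_total t s with h | h
  · have h1 : t ^ α ≤ s ^ α := Real.rpow_le_rpow ht h hα.le
    have h2 : 0 ≤ s ^ (α - 1) * t := mul_nonneg (Real.rpow_nonneg hs.le _) ht
    linarith
  · have ht0 : 0 < t := lt_of_lt_of_le hs h
    have h1 : t ^ α = t ^ (α - 1) * t := by
      rw [← Real.rpow_add_one ht0.ne' (α - 1)]
      ring_nf
    have h2 : t ^ (α - 1) ≤ s ^ (α - 1) :=
      Real.rpow_le_rpow_of_nonpos hs h (by linarith)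
    have h3 : 0 ≤ s ^ α := Real.rpow_nonneg hs.le _
    calc t ^ α = t ^ (α - 1) * t := h1
      _ ≤ s ^ (α - 1) * t := mul_le_mul_of_nonneg_right h2 ht
      _ ≤ s ^ α + s ^ (α - 1) * t := le_add_of_nonneg_left h3

lemma abs_clamp_sub_clamp {a b s t : ℝ} :
    |max (min s b) a - max (min t b) a| ≤ |s - t| := by
  refine le_trans (abs_max_sub_max_le_abs _ _ _) ?_
  refine le_trans (abs_min_sub_min_le_max _ _ _ _) ?_
  simp

section Ext

variable {d : ℕ}
local notation "E" => EuclideanSpace ℝ (Fin d)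

lemma continuous_of_holder {v : E → ℝ} {H α : ℝ} (hH : 0 ≤ H) (hα : 0 < α)
    (h : ∀ x y, |v x - v y| ≤ H * ‖x - y‖ ^ α) : Continuous v := by
  rw [Metric.continuous_iff]
  intro b ε hε
  refine ⟨(ε / (H + 1)) ^ α⁻¹, Real.rpow_pos_of_pos (div_pos hε (by linarith)) _, fun a hab => ?_⟩
  have h1 : dist (v a) (v b) ≤ H * ‖a - b‖ ^ α := by
    rw [Real.dist_eq]; exact h a b
  have h2 : ‖a - b‖ ^ α ≤ ((ε / (H + 1)) ^ α⁻¹) ^ α := by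
    refine Real.rpow_le_rpow (norm_nonneg _) ?_ hα.le
    rw [← dist_eq_norm]; exact hab.le
  have hpos : (0:ℝ) < ε / (H + 1) := div_pos hε (by linarith)
  have h3 : ((ε / (H + 1)) ^ α⁻¹) ^ α = ε / (H + 1) := by
    rw [← Real.rpow_mul hpos.le, inv_mul_cancel₀ hα.ne', Real.rpow_one]
  have h4 : H * (ε / (H + 1)) < ε := by
    rw [div_eq_inv_mul, ← mul_assoc]
    rw [show H * (H+1)⁻¹ * ε = (H / (H+1)) * ε by ring]
    have : H / (H + 1) < 1 := (div_lt_one (by linarith)).mpr (by linarith)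
    nlinarith
  calc dist (v a) (v b) ≤ H * ‖a - b‖ ^ α := h1
    _ ≤ H * ((ε / (H + 1)) ^ α⁻¹) ^ α := mul_le_mul_of_nonneg_left h2 hH
    _ = H * (ε / (H + 1)) := by rw [h3]
    _ < ε := h4


lemma holder_extend {Ωs : Set E} {x₀ : E} (hx₀ : x₀ ∈ Ωs) {α H R : ℝ}
    (hα : 0 < α) (hα1 : α ≤ 1) (hH : 0 ≤ H) (hR : 0 ≤ R)
    (hdiam : ∀ x ∈ Ωs, ∀ y ∈ Ωs, ‖x - y‖ ≤ R)
    (u : E → ℝ) (hu : ∀ x ∈ Ωs, ∀ y ∈ Ωs, |u x - u y| ≤ H * ‖x - y‖ ^ α) :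
    ∃ v : E → ℝ, Measurable v ∧ (∀ x ∈ Ωs, v x = u x) ∧
      (∀ x y, |v x - v y| ≤ H * ‖x - y‖ ^ α) ∧ (∀ x, |v x - u x₀| ≤ H * R ^ α) := by
  haveI : Nonempty Ωs := ⟨⟨x₀, hx₀⟩⟩
  set c : ℝ := H * R ^ α with hc
  have hc0 : 0 ≤ c := mul_nonneg hH (Real.rpow_nonneg hR _)
  set w : E → ℝ := fun x => ⨅ y : Ωs, (u y + H * ‖x - (y : E)‖ ^ α) with hw
  have hbdd : ∀ x : E, BddBelow (Set.range fun y : Ωs => u y + H * ‖x - (y : E)‖ ^ α) := by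
    intro x
    refine ⟨u x₀ - c, ?_⟩
    rintro r ⟨y, rfl⟩
    have h1 : |u y - u x₀| ≤ c := by
      refine le_trans (hu y y.2 x₀ hx₀) ?_
      exact mul_le_mul_of_nonneg_left
        (Real.rpow_le_rpow (norm_nonneg _) (hdiam y y.2 x₀ hx₀) hα.le) hH
    have h2 : 0 ≤ H * ‖x - (y : E)‖ ^ α :=
      mul_nonneg hH (Real.rpow_nonneg (norm_nonneg _) _)
    have := abs_le.mp h1
    simp only
    linarith [this.1]
  have hwle : ∀ x ∈ Ωs, w x ≤ u x := by
    intro x hx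
    have := ciInf_le (hbdd x) ⟨x, hx⟩
    simpa [sub_self, Real.zero_rpow hα.ne'] using this
  have hwge : ∀ x ∈ Ωs, u x ≤ w x := by
    intro x hx
    refine le_ciInf fun y => ?_
    have h1 := hu x hx y y.2
    have h2 := le_trans (le_abs_self (u x - u (y : E))) h1
    linarith
  have hwhold : ∀ x x' : E, w x ≤ w x' + H * ‖x - x'‖ ^ α := by
    intro x x'
    have key : ∀ y : Ωs, w x ≤ u y + H * ‖x' - (y : E)‖ ^ α + H * ‖x - x'‖ ^ α := by
      intro y
      refine le_trans (ciInf_le (hbdd x) y) ?_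
      have htri : ‖x - (y : E)‖ ≤ ‖x - x'‖ + ‖x' - (y : E)‖ := by
        calc ‖x - (y : E)‖ = ‖(x - x') + (x' - (y : E))‖ := by rw [sub_add_sub_cancel]
          _ ≤ ‖x - x'‖ + ‖x' - (y : E)‖ := norm_add_le _ _
      have h1 : ‖x - (y : E)‖ ^ α ≤ (‖x - x'‖ + ‖x' - (y : E)‖) ^ α :=
        Real.rpow_le_rpow (norm_nonneg _) htri hα.le
      have h2 : (‖x - x'‖ + ‖x' - (y : E)‖) ^ α ≤ ‖x - x'‖ ^ α + ‖x' - (y : E)‖ ^ α :=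
        rpow_add_le_real (norm_nonneg _) (norm_nonneg _) hα.le hα1
      have := mul_le_mul_of_nonneg_left (le_trans h1 h2) hH
      linarith [this]
    have : w x - H * ‖x - x'‖ ^ α ≤ w x' := by
      refine le_ciInf fun y => ?_
      have := key y
      linarith
    linarith
  have hwabs : ∀ x x' : E, |w x - w x'| ≤ H * ‖x - x'‖ ^ α := by
    intro x x'
    rw [abs_sub_le_iff]
    constructor
    · have := hwhold x x'; linarith
    · have := hwhold x' x
      rw [norm_sub_rev x' x] at this
      linarith
  set v : E → ℝ := fun x => max (min (w x) (u x₀ + c)) (u x₀ - c) with hv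
  have hvhold : ∀ x y, |v x - v y| ≤ H * ‖x - y‖ ^ α := fun x y =>
    le_trans abs_clamp_sub_clamp (hwabs x y)
  have hveq : ∀ x ∈ Ωs, v x = u x := by
    intro x hx
    have hwx : w x = u x := le_antisymm (hwle x hx) (hwge x hx)
    have h1 : |u x - u x₀| ≤ c := by
      refine le_trans (hu x hx x₀ hx₀) ?_
      exact mul_le_mul_of_nonneg_left
        (Real.rpow_le_rpow (norm_nonneg _) (hdiam x hx x₀ hx₀) hα.le) hH
    have := abs_le.mp h1
    rw [hv]
    simp only [hwx]
    rw [min_eq_left (by linarith), max_eq_left (by linarith)]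
  have hvbd : ∀ x, |v x - u x₀| ≤ c := by
    intro x
    rw [abs_le]
    constructor
    · have := le_max_right (min (w x) (u x₀ + c)) (u x₀ - c)
      simp only [hv]; linarith
    · have h1 : min (w x) (u x₀ + c) ≤ u x₀ + c := min_le_right _ _
      have h2 : v x ≤ u x₀ + c := max_le h1 (by linarith)
      linarith
  exact ⟨v, (continuous_of_holder hH hα hvhold).measurable, hveq, hvhold, hvbd⟩

end Ext

section CE
variable {d : ℕ}
local notation "E" => EuclideanSpace ℝ (Fin d)

lemma contraction_est {Ωs : Set E} {κ : Kernel E E} [IsMarkovKernel κ]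
    {D θ : ℝ} (hcon : ExpContracting Ωs κ D θ) (hD : 0 ≤ D) {R : ℝ} (hR : 0 < R) (hθ : 0 < θ)
    {α : ℝ} (hα : 0 < α) (hα1 : α ≤ 1)
    {x y : E} (hx : x ∈ Ωs) (hy : y ∈ Ωs) (hxy : ‖x - y‖ ≤ R) (Δ : ℕ)
    {U : Set E} (hU : MeasurableSet U) {R2 : ℝ}
    (hUb : ∀ p ∈ U, ∀ q ∈ U, ‖p - q‖ ≤ R2)
    (hxU : kernelIter κ Δ x U = 1) (hyU : kernelIter κ Δ y U = 1)
    {g : E → ℂ} (hg : Measurable g) {Hg Mg : ℝ} (hHg : 0 ≤ Hg)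
    (hgb : ∀ z, ‖g z‖ ≤ Mg)
    (hgh : ∀ p q, ‖g p - g q‖ ≤ Hg * ‖p - q‖ ^ α) :
    ‖(∫ e, g e ∂(kernelIter κ Δ x)) - ∫ e, g e ∂(kernelIter κ Δ y)‖
      ≤ Hg * (1 + D) * (θ ^ Δ * R) ^ α := by
  haveI := kernelIter_isMarkov κ Δ
  obtain ⟨π, ⟨hπ1, hπ2⟩, hπ3⟩ := hcon x hx y hy Δ
  haveI : IsProbabilityMeasure π := by
    constructor
    have h := congrArg (fun μ : Measure E => μ Set.univ) hπ1
    simp only [Measure.map_apply measurable_fst MeasurableSet.univ, Set.preimage_univ] at h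
    rw [h]; exact measure_univ
  set s : ℝ := θ ^ Δ * R with hs_def
  have hs : 0 < s := mul_pos (pow_pos hθ Δ) hR
  have h1 : π (Prod.fst ⁻¹' Uᶜ) = 0 := by
    have hm := Measure.map_apply (μ := π) measurable_fst hU.compl
    rw [hπ1] at hm
    rw [← hm, measure_compl hU (measure_ne_top _ _), measure_univ, hxU, tsub_self]
  have h2 : π (Prod.snd ⁻¹' Uᶜ) = 0 := by
    have hm := Measure.map_apply (μ := π) measurable_snd hU.compl
    rw [hπ2] at hm
    rw [← hm, measure_compl hU (measure_ne_top _ _), measure_univ, hyU, tsub_self]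
  have hae : ∀ᵐ p ∂π, p.1 ∈ U ∧ p.2 ∈ U := by
    have e1 : ∀ᵐ p ∂π, p.1 ∈ U := by
      rw [ae_iff]; exact h1
    have e2 : ∀ᵐ p ∂π, p.2 ∈ U := by
      rw [ae_iff]; exact h2
    exact e1.and e2
  have hd_meas : Measurable fun p : E × E => ‖p.1 - p.2‖ :=
    (continuous_fst.sub continuous_snd).norm.measurable
  have hInt_d : Integrable (fun p : E × E => ‖p.1 - p.2‖) π := by
    refine Integrable.mono' (integrable_const R2) hd_meas.aestronglyMeasurable ?_
    refine hae.mono fun p hp => ?_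
    rw [Real.norm_eq_abs, abs_of_nonneg (norm_nonneg _)]
    exact hUb _ hp.1 _ hp.2
  have hgint1 : Integrable (fun p : E × E => g p.1) π := by
    refine Integrable.mono' (integrable_const Mg)
      ((hg.comp measurable_fst).aestronglyMeasurable) ?_
    exact Filter.Eventually.of_forall fun p => hgb _
  have hgint2 : Integrable (fun p : E × E => g p.2) π := by
    refine Integrable.mono' (integrable_const Mg)
      ((hg.comp measurable_snd).aestronglyMeasurable) ?_
    exact Filter.Eventually.of_forall fun p => hgb _
  have e1 : ∫ e, g e ∂(kernelIter κ Δ x) = ∫ p, g p.1 ∂π := by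
    rw [← hπ1]
    exact integral_map measurable_fst.aemeasurable hg.aestronglyMeasurable
  have e2 : ∫ e, g e ∂(kernelIter κ Δ y) = ∫ p, g p.2 ∂π := by
    rw [← hπ2]
    exact integral_map measurable_snd.aemeasurable hg.aestronglyMeasurable
  have hss : s ^ (α - 1) * s = s ^ α := by
    rw [← Real.rpow_add_one hs.ne' (α - 1)]; ring_nf
  have hsa : 0 ≤ s ^ (α - 1) := Real.rpow_nonneg hs.le _
  calc ‖(∫ e, g e ∂(kernelIter κ Δ x)) - ∫ e, g e ∂(kernelIter κ Δ y)‖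
      = ‖∫ p, (g p.1 - g p.2) ∂π‖ := by rw [e1, e2, ← integral_sub hgint1 hgint2]
    _ ≤ ∫ p, ‖g p.1 - g p.2‖ ∂π := norm_integral_le_integral_norm _
    _ ≤ ∫ p, (Hg * s ^ α + (Hg * s ^ (α - 1)) * ‖p.1 - p.2‖) ∂π := by
        refine integral_mono_ae (hgint1.sub hgint2).norm
          ((integrable_const _).add (hInt_d.const_mul _))
          (Filter.Eventually.of_forall fun p => ?_)
        refine le_trans (hgh p.1 p.2) ?_
        have h := rpow_le_aux (norm_nonneg (p.1 - p.2)) hs hα hα1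
        have h' := mul_le_mul_of_nonneg_left h hHg
        show Hg * ‖p.1 - p.2‖ ^ α ≤ Hg * s ^ α + (Hg * s ^ (α - 1)) * ‖p.1 - p.2‖
        nlinarith [h']
    _ = Hg * s ^ α + (Hg * s ^ (α - 1)) * ∫ p, ‖p.1 - p.2‖ ∂π := by
        rw [integral_add (integrable_const _) (hInt_d.const_mul _), integral_const,
          probReal_univ, one_smul, integral_const_mul]
    _ ≤ Hg * s ^ α + (Hg * s ^ (α - 1)) * (D * θ ^ Δ * ‖x - y‖) :=
        add_le_add le_rfl (mul_le_mul_of_nonneg_left hπ3 (mul_nonneg hHg hsa))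
    _ ≤ Hg * s ^ α + (Hg * s ^ (α - 1)) * (D * θ ^ Δ * R) := by
        refine add_le_add le_rfl (mul_le_mul_of_nonneg_left ?_ (mul_nonneg hHg hsa))
        exact mul_le_mul_of_nonneg_left hxy (mul_nonneg hD (pow_nonneg hθ.le _))
    _ = Hg * (1 + D) * s ^ α := by
        have : (Hg * s ^ (α - 1)) * (D * θ ^ Δ * R) = Hg * D * (s ^ (α - 1) * s) := by
          rw [hs_def]; ring
        rw [this, hss]; ring
end CE
end AuxAnalysis

/-- decay of correlations for Hölder observables. There is a constant `C`
depending only on `D` and the diameter of `Ω` such that: for any exponentially contracting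
Markov chain on a bounded `Ω ⊆ ℝ^d`, any `α ∈ (0,1]`, any bounded measurable `f : Ω → ℂ`
with `α`-Hölder constant at most `H`, and all `ℓ, m`,
`|E[f(X_m)f(X_ℓ)] − E[f(X_m)]E[f(X_ℓ)]| ≤ C H² θ^{α|m−ℓ|}`. -/
theorem markov_decay_of_correlations
    (D R : ℝ) (hD : 1 ≤ D) (hR : 0 ≤ R) :
    ∃ C : ℝ, 0 < C ∧
      ∀ (d : ℕ) (Ωs : Set (EuclideanSpace ℝ (Fin d))),
        Bornology.IsBounded Ωs → Metric.diam Ωs = R →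
      ∀ θ : ℝ, θ ∈ Set.Ioo (0:ℝ) 1 →
      ∀ (κ : Kernel (EuclideanSpace ℝ (Fin d)) (EuclideanSpace ℝ (Fin d))),
        IsMarkovKernel κ → ExpContracting Ωs κ D θ →
      ∀ (Ω : Type) [MeasurableSpace Ω] (P : Measure Ω), IsProbabilityMeasure P →
      ∀ (X : ℕ → Ω → EuclideanSpace ℝ (Fin d)), IsMarkovChainWith P κ X →
        (∀ n ω, X n ω ∈ Ωs) →
      ∀ α : ℝ, α ∈ Set.Ioc (0:ℝ) 1 →
      ∀ (f : EuclideanSpace ℝ (Fin d) → ℂ), Measurable f →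
      ∀ H : ℝ, (∀ x ∈ Ωs, ∀ y ∈ Ωs, ‖f x - f y‖ ≤ H * ‖x - y‖ ^ α) →
      ∀ ℓ m : ℕ,
        ‖(∫ ω, f (X m ω) * f (X ℓ ω) ∂P)
            - (∫ ω, f (X m ω) ∂P) * ∫ ω, f (X ℓ ω) ∂P‖
          ≤ C * H ^ 2 * θ ^ (α * |(m : ℝ) - (ℓ : ℝ)|) := by
  have hCpos : (0:ℝ) < 4 * (1 + D) * (1 + R) ^ 2 := by
    have h2 := pow_pos (show (0:ℝ) < 1 + R by linarith) 2
    nlinarith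
  refine ⟨4 * (1 + D) * (1 + R) ^ 2, hCpos, ?_⟩
  intro d Ωs hbdd hdiam θ hθ κ hκ hcon Ω mΩ P hP X hchain hmem α hα f hf H hHolder
  haveI := hκ
  haveI := hP
  obtain ⟨hθ0, hθ1⟩ := hθ
  obtain ⟨hα0, hα1⟩ := hα
  have hΩne : Nonempty Ω := by
    by_contra h
    rw [not_nonempty_iff] at h
    have h1 : P Set.univ = 1 := measure_univ
    rw [Set.univ_eq_empty_iff.mpr h, measure_empty] at h1
    exact zero_ne_one h1
  obtain ⟨ω₀⟩ := hΩne
  have hx₀ : X 0 ω₀ ∈ Ωs := hmem 0 ω₀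
  set x₀ : EuclideanSpace ℝ (Fin d) := X 0 ω₀ with hx₀def
  have hRHSnn : ∀ ℓ m : ℕ,
      0 ≤ 4 * (1 + D) * (1 + R) ^ 2 * H ^ 2 * θ ^ (α * |(m:ℝ) - (ℓ:ℝ)|) := fun ℓ m =>
    mul_nonneg (mul_nonneg hCpos.le (sq_nonneg H)) (Real.rpow_nonneg hθ0.le _)
  rcases hR.eq_or_lt with hR0 | hRpos
  · -- degenerate case: R = 0, the chain is constant
    have hXeq : ∀ k ω, X k ω = x₀ := by
      intro k ω
      have h := Metric.dist_le_diam_of_mem hbdd (hmem k ω) hx₀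
      rw [hdiam, ← hR0] at h
      exact eq_of_dist_eq_zero (le_antisymm h dist_nonneg)
    intro ℓ m
    have h0 : (∫ ω, f (X m ω) * f (X ℓ ω) ∂P)
        - (∫ ω, f (X m ω) ∂P) * ∫ ω, f (X ℓ ω) ∂P = 0 := by
      simp only [hXeq]
      rw [integral_const, integral_const, probReal_univ, one_smul,
        one_smul]
      ring
    rw [h0]
    simpa using hRHSnn ℓ m
  -- main case: R > 0
  have hH0 : 0 ≤ H := by
    have hex : ∃ x ∈ Ωs, ∃ y ∈ Ωs, 0 < dist x y := by
      by_contra hcon'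
      push_neg at hcon'
      have h := Metric.diam_le_of_forall_dist_le le_rfl hcon'
      rw [hdiam] at h; linarith
    obtain ⟨x1, hx1, y1, hy1, hd1⟩ := hex
    have h := hHolder x1 hx1 y1 hy1
    rw [dist_eq_norm] at hd1
    have h2 : 0 < ‖x1 - y1‖ ^ α := Real.rpow_pos_of_pos hd1 α
    have h3 := (norm_nonneg (f x1 - f y1)).trans h
    nlinarith
  have hdnorm : ∀ x ∈ Ωs, ∀ y ∈ Ωs, ‖x - y‖ ≤ R := by
    intro x hx y hy
    rw [← dist_eq_norm]
    exact le_of_le_of_eq (Metric.dist_le_diam_of_mem hbdd hx hy) hdiam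
  have hu : ∀ x ∈ Ωs, ∀ y ∈ Ωs, |(f x).re - (f y).re| ≤ H * ‖x - y‖ ^ α := by
    intro x hx y hy
    have h1 : |(f x).re - (f y).re| = |(f x - f y).re| := by rw [Complex.sub_re]
    rw [h1]
    exact (Complex.abs_re_le_norm _).trans (hHolder x hx y hy)
  have hv : ∀ x ∈ Ωs, ∀ y ∈ Ωs, |(f x).im - (f y).im| ≤ H * ‖x - y‖ ^ α := by
    intro x hx y hy
    have h1 : |(f x).im - (f y).im| = |(f x - f y).im| := by rw [Complex.sub_im]
    rw [h1]
    exact (Complex.abs_im_le_norm _).trans (hHolder x hx y hy)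
  obtain ⟨ub, hub_meas, hub_eq, hub_hold, hub_bd⟩ :=
    holder_extend hx₀ hα0 hα1 hH0 hR hdnorm (fun x => (f x).re) hu
  obtain ⟨vb, hvb_meas, hvb_eq, hvb_hold, hvb_bd⟩ :=
    holder_extend hx₀ hα0 hα1 hH0 hR hdnorm (fun x => (f x).im) hv
  set fb : EuclideanSpace ℝ (Fin d) → ℂ :=
    fun x => (ub x : ℂ) + (vb x : ℂ) * Complex.I with hfb_def
  have hfb_meas : Measurable fb :=
    (Complex.measurable_ofReal.comp hub_meas).add
      ((Complex.measurable_ofReal.comp hvb_meas).mul measurable_const)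
  have hfb_eq : ∀ x ∈ Ωs, fb x = f x := by
    intro x hx
    rw [hfb_def]
    simp only
    rw [hub_eq x hx, hvb_eq x hx]
    exact Complex.re_add_im (f x)
  have hfb_hold : ∀ x y, ‖fb x - fb y‖ ≤ 2 * H * ‖x - y‖ ^ α := by
    intro x y
    have hdiff : fb x - fb y
        = ((ub x - ub y : ℝ) : ℂ) + ((vb x - vb y : ℝ) : ℂ) * Complex.I := by
      rw [hfb_def]; push_cast; ring
    rw [hdiff]
    refine (norm_add_le _ _).trans ?_
    rw [norm_mul, Complex.norm_I, mul_one, Complex.norm_real, Complex.norm_real,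
      Real.norm_eq_abs, Real.norm_eq_abs]
    have h1 := hub_hold x y
    have h2 := hvb_hold x y
    linarith
  set M : ℝ := 2 * ‖f x₀‖ + 2 * (H * R ^ α) with hM
  have hfb_bd : ∀ x, ‖fb x‖ ≤ M := by
    intro x
    rw [hfb_def]
    simp only
    refine (norm_add_le _ _).trans ?_
    rw [norm_mul, Complex.norm_I, mul_one, Complex.norm_real, Complex.norm_real,
      Real.norm_eq_abs, Real.norm_eq_abs]
    have h1 := hub_bd x
    have h2 := hvb_bd x
    have h3 : |(f x₀).re| ≤ ‖f x₀‖ := Complex.abs_re_le_norm _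
    have h4 : |(f x₀).im| ≤ ‖f x₀‖ := Complex.abs_im_le_norm _
    have h5 : |ub x| ≤ H * R ^ α + |(f x₀).re| := by
      have := abs_add_le (ub x - (f x₀).re) ((f x₀).re)
      simp only [sub_add_cancel] at this
      linarith
    have h6 : |vb x| ≤ H * R ^ α + |(f x₀).im| := by
      have := abs_add_le (vb x - (f x₀).im) ((f x₀).im)
      simp only [sub_add_cancel] at this
      linarith
    rw [hM]; linarith
  have key : ∀ ℓ Δ : ℕ,
      ‖(∫ ω, f (X (ℓ + Δ) ω) * f (X ℓ ω) ∂P)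
        - (∫ ω, f (X (ℓ + Δ) ω) ∂P) * ∫ ω, f (X ℓ ω) ∂P‖
      ≤ 4 * (1 + D) * (1 + R) ^ 2 * H ^ 2 * (θ ^ Δ) ^ α := by
    intro ℓ Δ
    haveI := kernelIter_isMarkov κ Δ
    have hfX : ∀ k ω, f (X k ω) = fb (X k ω) := fun k ω => (hfb_eq _ (hmem k ω)).symm
    simp only [hfX]
    set g : EuclideanSpace ℝ (Fin d) → ℂ :=
      fun x => ∫ e, fb e ∂(kernelIter κ Δ x) with hg_def
    have hg_sm : StronglyMeasurable g :=
      MeasureTheory.StronglyMeasurable.integral_kernel_prod_right (f := fun _ y => fb y)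
        (hfb_meas.stronglyMeasurable.comp_measurable measurable_snd)
    have hg_bd : ∀ x, ‖g x‖ ≤ M := by
      intro x
      show ‖∫ e, fb e ∂(kernelIter κ Δ x)‖ ≤ M
      refine (norm_integral_le_of_norm_le_const
        (Filter.Eventually.of_forall fun e => hfb_bd e)).trans ?_
      rw [probReal_univ, mul_one]
    set U : Set (EuclideanSpace ℝ (Fin d)) := Metric.closedBall x₀ R with hU_def
    have hU : MeasurableSet U := measurableSet_closedBall
    have hΩU : Ωs ⊆ U := by
      intro z hz
      rw [hU_def, Metric.mem_closedBall]
      exact le_of_le_of_eq (Metric.dist_le_diam_of_mem hbdd hz hx₀) hdiam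
    have hUb : ∀ p ∈ U, ∀ q ∈ U, ‖p - q‖ ≤ 2 * R := by
      intro p hp q hq
      rw [hU_def, Metric.mem_closedBall] at hp hq
      rw [← dist_eq_norm]
      calc dist p q ≤ dist p x₀ + dist x₀ q := dist_triangle _ _ _
        _ ≤ R + R := add_le_add hp (by rwa [dist_comm])
        _ = 2 * R := by ring
    have hGood : ∀ᵐ ω ∂P, kernelIter κ Δ (X ℓ ω) U = 1 := by
      have hmeas_t : Measurable fun ω => kernelIter κ Δ (X ℓ ω) U :=
        (Kernel.measurable_coe _ hU).comp (hchain.1 ℓ)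
      have h1 := multistep_set hchain ℓ Δ MeasurableSet.univ hU
      rw [Set.univ_inter, Measure.restrict_univ] at h1
      have h2 : X (ℓ + Δ) ⁻¹' U = Set.univ :=
        Set.eq_univ_of_forall fun ω => hΩU (hmem _ ω)
      rw [h2, measure_univ] at h1
      have hint : ∫⁻ ω, kernelIter κ Δ (X ℓ ω) U ∂P = 1 := h1.symm
      have hle1 : ∀ ω, kernelIter κ Δ (X ℓ ω) U ≤ 1 := fun ω => prob_le_one
      have hsub : ∫⁻ ω, (1 - kernelIter κ Δ (X ℓ ω) U) ∂P = 0 := by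
        rw [lintegral_sub hmeas_t (by rw [hint]; exact ENNReal.one_ne_top)
          (Filter.Eventually.of_forall hle1), hint, lintegral_one, measure_univ, tsub_self]
      have hz := (lintegral_eq_zero_iff (measurable_const.sub hmeas_t)).mp hsub
      refine hz.mono fun ω hω => ?_
      have h1a : (1:ℝ≥0∞) ≤ kernelIter κ Δ (X ℓ ω) U := tsub_eq_zero_iff_le.mp hω
      exact le_antisymm (hle1 ω) h1a
    have hg_int : Integrable (fun ω => g (X ℓ ω)) P :=
      Integrable.mono' (integrable_const M)
        ((hg_sm.comp_measurable (hchain.1 ℓ)).aestronglyMeasurable)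
        (Filter.Eventually.of_forall fun ω => hg_bd _)
    set A : ℂ := ∫ ω, g (X ℓ ω) ∂P with hA_def
    set K : ℝ := 2 * H * (1 + D) * (θ ^ Δ * R) ^ α with hK_def
    have hKae : ∀ᵐ ω ∂P, ‖g (X ℓ ω) - A‖ ≤ K := by
      refine hGood.mono fun ω hω => ?_
      have hrepr : g (X ℓ ω) - A = ∫ ω', (g (X ℓ ω) - g (X ℓ ω')) ∂P := by
        rw [integral_sub (integrable_const _) hg_int, integral_const, probReal_univ,
          one_smul]
      rw [hrepr]
      have hb : ‖∫ ω', (g (X ℓ ω) - g (X ℓ ω')) ∂P‖ ≤ ∫ _ω', K ∂P := by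
        refine norm_integral_le_of_norm_le (integrable_const K) ?_
        refine hGood.mono fun ω' hω' => ?_
        exact contraction_est hcon (by linarith) hRpos hθ0 hα0 hα1 (hmem ℓ ω) (hmem ℓ ω')
          (hdnorm _ (hmem ℓ ω) _ (hmem ℓ ω')) Δ hU hUb hω hω' hfb_meas
          (by linarith) hfb_bd hfb_hold
      rw [integral_const, probReal_univ, one_smul] at hb
      exact hb
    have I1 : ∫ ω, fb (X (ℓ + Δ) ω) ∂P = A := by
      have h := main_identity hchain ℓ Δ
        (measurable_const : Measurable fun _ : EuclideanSpace ℝ (Fin d) => (1:ℂ))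
        hfb_meas (Mψ := 1) (Mφ := M) (fun x => by norm_num) hfb_bd
      simp only [one_mul] at h
      rw [hA_def]
      simp only [hg_def]
      exact h
    have I2 : ∫ ω, fb (X (ℓ + Δ) ω) * fb (X ℓ ω) ∂P = ∫ ω, fb (X ℓ ω) * g (X ℓ ω) ∂P := by
      have h := main_identity hchain ℓ Δ hfb_meas hfb_meas (Mψ := M) (Mφ := M) hfb_bd hfb_bd
      have hc : ∫ ω, fb (X (ℓ + Δ) ω) * fb (X ℓ ω) ∂P
          = ∫ ω, fb (X ℓ ω) * fb (X (ℓ + Δ) ω) ∂P :=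
        integral_congr_ae (Filter.Eventually.of_forall fun ω => mul_comm _ _)
      rw [hc, h]
    have hfXl_int : Integrable (fun ω => fb (X ℓ ω)) P :=
      Integrable.mono' (integrable_const M)
        ((hfb_meas.comp (hchain.1 ℓ)).aestronglyMeasurable)
        (Filter.Eventually.of_forall fun ω => hfb_bd _)
    have hfg_int : Integrable (fun ω => fb (X ℓ ω) * g (X ℓ ω)) P := by
      refine Integrable.mono' (integrable_const (M * M))
        (((hfb_meas.comp (hchain.1 ℓ)).mul
          (hg_sm.comp_measurable (hchain.1 ℓ)).measurable).aestronglyMeasurable)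
        (Filter.Eventually.of_forall fun ω => ?_)
      rw [norm_mul]
      exact mul_le_mul (hfb_bd (X ℓ ω)) (hg_bd (X ℓ ω)) (norm_nonneg _)
        ((norm_nonneg (fb (X ℓ ω))).trans (hfb_bd (X ℓ ω)))
    have hsmul : ∀ (c : ℂ) (h : Ω → ℂ), ∫ ω, c * h ω ∂P = c * ∫ ω, h ω ∂P := by
      intro c h
      simp_rw [← smul_eq_mul, integral_smul]
    have intc1 : Integrable (fun ω => fb x₀ * g (X ℓ ω)) P := hg_int.const_mul _
    have intc2 : Integrable (fun ω => A * fb (X ℓ ω)) P := hfXl_int.const_mul _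
    have int1 : Integrable (fun ω => fb (X ℓ ω) * g (X ℓ ω) - fb x₀ * g (X ℓ ω)) P :=
      hfg_int.sub intc1
    have int2 : Integrable
        (fun ω => fb (X ℓ ω) * g (X ℓ ω) - fb x₀ * g (X ℓ ω) - A * fb (X ℓ ω)) P :=
      int1.sub intc2
    have hexp : (fun ω => (fb (X ℓ ω) - fb x₀) * (g (X ℓ ω) - A))
        = fun ω => fb (X ℓ ω) * g (X ℓ ω) - fb x₀ * g (X ℓ ω) - A * fb (X ℓ ω) + fb x₀ * A := by
      funext ω; ring
    have hrhs : ∫ ω, (fb (X ℓ ω) - fb x₀) * (g (X ℓ ω) - A) ∂P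
        = (∫ ω, fb (X ℓ ω) * g (X ℓ ω) ∂P) - fb x₀ * A
          - A * (∫ ω, fb (X ℓ ω) ∂P) + fb x₀ * A := by
      rw [hexp, integral_add int2 (integrable_const _),
        integral_sub int1 intc2,
        integral_sub hfg_int intc1,
        hsmul (fb x₀) (fun ω => g (X ℓ ω)), hsmul A (fun ω => fb (X ℓ ω)),
        integral_const, probReal_univ, one_smul, ← hA_def]
    have hcov : (∫ ω, fb (X (ℓ + Δ) ω) * fb (X ℓ ω) ∂P)
        - (∫ ω, fb (X (ℓ + Δ) ω) ∂P) * ∫ ω, fb (X ℓ ω) ∂P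
        = ∫ ω, (fb (X ℓ ω) - fb x₀) * (g (X ℓ ω) - A) ∂P := by
      rw [I2, I1, hrhs]
      ring
    rw [hcov]
    have h2HR : (0:ℝ) ≤ 2 * H * R ^ α :=
      mul_nonneg (by linarith) (Real.rpow_nonneg hR _)
    have hptbd : ∀ᵐ ω ∂P,
        ‖(fb (X ℓ ω) - fb x₀) * (g (X ℓ ω) - A)‖ ≤ (2 * H * R ^ α) * K := by
      refine hKae.mono fun ω hω => ?_
      rw [norm_mul]
      have h1 : ‖fb (X ℓ ω) - fb x₀‖ ≤ 2 * H * R ^ α := by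
        refine (hfb_hold _ _).trans ?_
        have hle := Real.rpow_le_rpow (norm_nonneg _) (hdnorm _ (hmem ℓ ω) _ hx₀) hα0.le
        have h2H : (0:ℝ) ≤ 2 * H := by linarith
        calc 2 * H * ‖X ℓ ω - x₀‖ ^ α ≤ 2 * H * R ^ α := by
              exact mul_le_mul_of_nonneg_left hle h2H
          _ = 2 * H * R ^ α := by ring
      exact mul_le_mul h1 hω (norm_nonneg _) h2HR
    have hnormint := norm_integral_le_of_norm_le (integrable_const ((2 * H * R ^ α) * K)) hptbd
    rw [integral_const, probReal_univ, one_smul] at hnormint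
    refine hnormint.trans ?_
    have hRα : R ^ α ≤ 1 + R := by
      rcases le_total R 1 with h | h
      · have := Real.rpow_le_one hR h hα0.le
        linarith
      · have h2 := Real.rpow_le_rpow_of_exponent_le h hα1
        rw [Real.rpow_one] at h2
        linarith
    have hsplit : (θ ^ Δ * R) ^ α = (θ ^ Δ) ^ α * R ^ α :=
      Real.mul_rpow (pow_nonneg hθ0.le _) hR
    have hRα0 : (0:ℝ) ≤ R ^ α := Real.rpow_nonneg hR _
    have hθα0 : (0:ℝ) ≤ (θ ^ Δ) ^ α := Real.rpow_nonneg (pow_nonneg hθ0.le _) _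
    rw [hK_def, hsplit]
    calc (2 * H * R ^ α) * (2 * H * (1 + D) * ((θ ^ Δ) ^ α * R ^ α))
        = (4 * (1 + D) * H ^ 2 * (θ ^ Δ) ^ α) * (R ^ α * R ^ α) := by ring
      _ ≤ (4 * (1 + D) * H ^ 2 * (θ ^ Δ) ^ α) * ((1 + R) * (1 + R)) := by
          refine mul_le_mul_of_nonneg_left (mul_le_mul hRα hRα hRα0 (by linarith)) ?_
          exact mul_nonneg (mul_nonneg (mul_nonneg (by norm_num) (by linarith)) (sq_nonneg H))
            hθα0
      _ = 4 * (1 + D) * (1 + R) ^ 2 * H ^ 2 * (θ ^ Δ) ^ α := by ring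
  intro ℓ m
  rcases le_total ℓ m with hlm | hml
  · obtain ⟨Δ, rfl⟩ : ∃ Δ, m = ℓ + Δ := ⟨m - ℓ, (Nat.add_sub_cancel' hlm).symm⟩
    have habs : |((ℓ + Δ : ℕ) : ℝ) - (ℓ : ℝ)| = (Δ : ℝ) := by
      push_cast
      rw [add_sub_cancel_left, abs_of_nonneg (Nat.cast_nonneg _)]
    rw [habs, mul_comm α (Δ:ℝ), Real.rpow_natCast_mul hθ0.le]
    exact key ℓ Δ
  · obtain ⟨Δ, rfl⟩ : ∃ Δ, ℓ = m + Δ := ⟨ℓ - m, (Nat.add_sub_cancel' hml).symm⟩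
    have habs : |((m : ℕ) : ℝ) - ((m + Δ : ℕ) : ℝ)| = (Δ : ℝ) := by
      push_cast
      rw [abs_sub_comm, add_sub_cancel_left, abs_of_nonneg (Nat.cast_nonneg _)]
    rw [habs, mul_comm α (Δ:ℝ), Real.rpow_natCast_mul hθ0.le]
    have hcomm1 : (∫ ω, f (X m ω) * f (X (m + Δ) ω) ∂P)
        = ∫ ω, f (X (m + Δ) ω) * f (X m ω) ∂P :=
      integral_congr_ae (Filter.Eventually.of_forall fun ω => mul_comm _ _)
    rw [hcomm1, mul_comm (∫ ω, f (X m ω) ∂P)]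
    exact key m Δ


end
end
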